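/- Suppose M is a commutative monoid that is also a convex space (equipped with binary convex combinations). Then the map D(M × X) → M × D(X), sending a finitely-supported distribution μ on M × X to the pair (expected value of the first component under μ, pushforward of μ along the second projection), defines a distributive law of the finitely-supported distribution monad D over the writer monad M × (−): it is natural in X and satisfies the unit laws for both monads. Verify at least the two unit laws: it sends η_D(m, x) to (m, η_D(x)), and it sends D(η_writer)(μ) = the distribution μ' on M × X with all costs 0 to (0, μ). -/

import Mathlib

/-- The candidate distributive law `D ∘ Writer → Writer ∘ D`: it sends a
finitely-supported (real-weighted) distribution `μ` on `M × X` to the pair of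
the expected value of the first component and the pushforward along the second
projection.  Convexity of `M` is modeled by an `ℝ`-module structure. -/
noncomputable def expectationLaw {M : Type*} [AddCommMonoid M] [Module ℝ M] (X : Type*)
    (μ : (M × X) →₀ ℝ) : M × (X →₀ ℝ) :=
  (μ.sum fun p w => w • p.1, Finsupp.mapDomain Prod.snd μ)

section

variable {M : Type*} [AddCommMonoid M] [Module ℝ M] {X : Type*}

theorem expectationLaw_single (m : M) (x : X) (w : ℝ) :
    expectationLaw X (Finsupp.single (m, x) w) = (w • m, Finsupp.single x w) := by
  simp only [expectationLaw, Finsupp.sum_single_index, zero_smul, Finsupp.mapDomain_single]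

theorem expectationLaw_mapDomain_graph (c : X → M) (μ : X →₀ ℝ) :
    expectationLaw X (μ.mapDomain fun x => (c x, x)) = (μ.sum fun x w => w • c x, μ) := by
  refine Prod.ext ?_ ?_
  · exact Finsupp.sum_mapDomain_index (h := fun (p : M × X) (w : ℝ) => w • p.1)
      (fun _ => zero_smul ℝ _) (fun _ _ _ => add_smul _ _ _)
  · change (μ.mapDomain _).mapDomain Prod.snd = μ
    rw [← Finsupp.mapDomain_comp]
    exact Finsupp.mapDomain_id

end

/-- The expectation-and-pushforward map satisfies the two unit laws of a
distributive law of the distribution monad over the writer monad: it sends the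
point mass at `(m, x)` to `(m, point mass at x)`, and it sends a distribution
with all costs `0` to `(0, μ)`. -/
theorem expectationLaw_unit_laws {M : Type*} [AddCommMonoid M] [Module ℝ M] :
    (∀ (X : Type*) (m : M) (x : X),
      expectationLaw X (Finsupp.single (m, x) 1) = (m, Finsupp.single x 1)) ∧
    (∀ (X : Type*) (μ : X →₀ ℝ),
      expectationLaw X (Finsupp.mapDomain (fun x => ((0 : M), x)) μ) =
        (0, μ)) := by
  refine ⟨fun X m x => ?_, fun X μ => ?_⟩
  · simpa only [one_smul] using expectationLaw_single m x 1
  · simpa only [smul_zero, Finsupp.sum_fun_zero] using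
      expectationLaw_mapDomain_graph (fun _ : X => (0 : M)) μ
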